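/- If L is a finite dismantlable lattice whose nullity equals k, then the order dimension of L is at most k + 1. -/

import Mathlib

/-- A family of `t` relations is a *realizer* of the relation `le`:
each member is a linear order (on the whole ground set) and their
intersection is exactly `le`.  (In particular each member extends `le`.) -/
def IsRealizer {α : Type*} (le : α → α → Prop) {t : ℕ}
    (R : Fin t → α → α → Prop) : Prop :=
  (∀ i, IsLinearOrder α (R i)) ∧ ∀ x y, le x y ↔ ∀ i, R i x y

/-- The Dushnik–Miller order dimension of the relation `le`: the least
positive number `t` of linear extensions whose intersection is `le`. -/
noncomputable def orderDim {α : Type*} (le : α → α → Prop) : ℕ :=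
  sInf {t | 0 < t ∧ ∃ R : Fin t → α → α → Prop, IsRealizer le R}

/-- An element of a poset is doubly irreducible if it has at most one lower
cover and at most one upper cover. -/
def DoublyIrreducible {α : Type*} [PartialOrder α] (z : α) : Prop :=
  {w | w ⋖ z}.Subsingleton ∧ {w | z ⋖ w}.Subsingleton

/-- An element is reducible if it is not doubly irreducible. -/
def Reducible {α : Type*} [PartialOrder α] (z : α) : Prop :=
  ¬ DoublyIrreducible z

/-- A lattice is an RC-lattice if any two of its reducible elements are
comparable. -/
def IsRCLattice (α : Type*) [Lattice α] : Prop :=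
  ∀ x y : α, Reducible x → Reducible y → (x ≤ y ∨ y ≤ x)


/-- The ground set of the complete fundamental basic block `L_r`:
the chain `A₁ ≺ x₁ ≺ A₂ ≺ ⋯ ≺ x_{r-1} ≺ A_r` (of length `2r-1`,
`A_{i+1}` sitting at position `2i`, `x_{i+1}` at position `2i+1`),
together with the doubly irreducible elements `c_{ij}` for `1 ≤ i < j ≤ r`. -/
def Lr (r : ℕ) : Type :=
  Fin (2 * r - 1) ⊕ {p : Fin r × Fin r // (p.1 : ℕ) < (p.2 : ℕ)}

namespace Lr

/-- The order of `L_r`: on the chain it is the usual order; `z ≤ c_{ij}` iff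
`z ≤ A_i`; `c_{ij} ≤ z` iff `A_j ≤ z`; `c_{ij} ≤ c_{kl}` iff `(i,j) = (k,l)`
or `j ≤ k`. -/
def le {r : ℕ} (x y : Lr r) : Prop :=
  match x, y with
  | Sum.inl k, Sum.inl k' => (k : ℕ) ≤ (k' : ℕ)
  | Sum.inl k, Sum.inr c => (k : ℕ) ≤ 2 * (c.1.1 : ℕ)
  | Sum.inr c, Sum.inl k => 2 * (c.1.2 : ℕ) ≤ (k : ℕ)
  | Sum.inr c, Sum.inr c' =>
      ((c.1.1 : ℕ) = (c'.1.1 : ℕ) ∧ (c.1.2 : ℕ) = (c'.1.2 : ℕ)) ∨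
        (c.1.2 : ℕ) ≤ (c'.1.1 : ℕ)

instance (r : ℕ) : PartialOrder (Lr r) where
  le := le
  le_refl x := by rcases x with k | ⟨p, hp⟩ <;> simp [le]
  le_trans x y z hxy hyz := by
    rcases x with k | ⟨p, hp⟩ <;> rcases y with k' | ⟨q, hq⟩ <;>
      rcases z with k'' | ⟨t, ht⟩ <;>
      simp only [le] at hxy hyz ⊢ <;> omega
  le_antisymm x y hxy hyx := by
    rcases x with k | ⟨p, hp⟩ <;> rcases y with k' | ⟨q, hq⟩ <;>
      simp only [le] at hxy hyx
    · exact congrArg Sum.inl (Fin.ext (by omega))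
    · omega
    · omega
    · have h1 : (p.1 : ℕ) = (q.1 : ℕ) := by omega
      have h2 : (p.2 : ℕ) = (q.2 : ℕ) := by omega
      exact congrArg Sum.inr (Subtype.ext (Prod.ext (Fin.ext h1) (Fin.ext h2)))

/-- The reducible element `A_{i+1}` of `L_r` (`i` is 0-based). -/
def A {r : ℕ} (i : Fin r) : Lr r :=
  Sum.inl ⟨2 * (i : ℕ), by have := i.2; omega⟩

/-- The doubly irreducible chain element `x_{i+1}` of `L_r` (`i` is 0-based). -/
def X {r : ℕ} (i : Fin (r - 1)) : Lr r :=
  Sum.inl ⟨2 * (i : ℕ) + 1, by have := i.2; omega⟩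

/-- The doubly irreducible element `c_{(i+1)(j+1)}` of `L_r`
(`i`, `j` are 0-based). -/
def c {r : ℕ} (i j : Fin r) (h : (i : ℕ) < (j : ℕ)) : Lr r :=
  Sum.inr ⟨(i, j), h⟩

end Lr


/-- The adjunct order `L₁ ]ᵇₐ L₂` on the disjoint union of two ordered sets
(with respect to the pair `a < b` of the first one):
`x ≤ y` iff both lie in `L₁` and `x ≤ y` there, or both lie in `L₂` and
`x ≤ y` there, or `x ∈ L₁`, `y ∈ L₂` and `x ≤ a`, or `x ∈ L₂`, `y ∈ L₁`
and `b ≤ y`. -/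
def adjunctLE {α β : Type*} [LE α] [LE β] (a b : α) :
    α ⊕ β → α ⊕ β → Prop
  | Sum.inl x, Sum.inl y => x ≤ y
  | Sum.inl x, Sum.inr _ => x ≤ a
  | Sum.inr _, Sum.inl y => b ≤ y
  | Sum.inr x, Sum.inr y => x ≤ y

/-- A subset of a lattice is a sublattice if it is closed under `⊔` and `⊓`. -/
def IsSublatticeSet {α : Type*} [Lattice α] (S : Set α) : Prop :=
  ∀ ⦃x⦄, x ∈ S → ∀ ⦃y⦄, y ∈ S → x ⊔ y ∈ S ∧ x ⊓ y ∈ S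

/-- A finite lattice on `n` elements is dismantlable if there is a chain
`L₁ ⊆ L₂ ⊆ ⋯ ⊆ Lₙ` of sublattices with `|Lᵢ| = i` exhausting the lattice. -/
def Dismantlable (α : Type*) [Lattice α] : Prop :=
  ∃ S : Fin (Nat.card α) → Set α,
    (∀ i, IsSublatticeSet (S i)) ∧
    (∀ i j, i ≤ j → S i ⊆ S j) ∧
    (∀ i, Nat.card (S i) = (i : ℕ) + 1) ∧
    (∀ x : α, ∃ i, x ∈ S i)

/-- The cover graph of a poset: `x` and `y` are adjacent iff one covers the
other. -/
def coverGraph (α : Type*) [PartialOrder α] : SimpleGraph α where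
  Adj x y := x ⋖ y ∨ y ⋖ x
  symm := ⟨fun x y h => h.symm⟩
  loopless := ⟨fun x h => by rcases h with h | h <;> exact lt_irrefl x h.lt⟩

/-- The nullity of a poset: (number of covering pairs) − (number of elements)
+ (number of connected components of the cover graph). -/
noncomputable def nullity (α : Type*) [PartialOrder α] : ℤ :=
  (Nat.card {p : α × α // p.1 ⋖ p.2} : ℤ) - (Nat.card α : ℤ) +
    (Nat.card (coverGraph α).ConnectedComponent : ℤ)

/-- `(a, b)` is an adjunct pair of the lattice `α`: `a < b` and `α` can be
partitioned into nonempty sublattices `K` and `M` with `a, b ∈ K`, `b` not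
covering `a` within `K`, such that for `x ∈ K`, `y ∈ M`: `x ≤ y ↔ x ≤ a`
and `y ≤ x ↔ b ≤ x`. -/
def IsAdjunctPair {α : Type*} [Lattice α] (a b : α) : Prop :=
  a < b ∧ ∃ K M : Set α, K.Nonempty ∧ M.Nonempty ∧ Disjoint K M ∧
    K ∪ M = Set.univ ∧ IsSublatticeSet K ∧ IsSublatticeSet M ∧
    a ∈ K ∧ b ∈ K ∧ (∃ z ∈ K, a < z ∧ z < b) ∧
    ∀ x ∈ K, ∀ y ∈ M, (x ≤ y ↔ x ≤ a) ∧ (y ≤ x ↔ b ≤ x)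

/-- `s` is the least upper bound of `x` and `y` with respect to the
relation `le`. -/
def IsLUBRel {γ : Type*} (le : γ → γ → Prop) (x y s : γ) : Prop :=
  le x s ∧ le y s ∧ ∀ z, le x z → le y z → le s z

/-- `s` is the greatest lower bound of `x` and `y` with respect to the
relation `le`. -/
def IsGLBRel {γ : Type*} (le : γ → γ → Prop) (x y s : γ) : Prop :=
  le s x ∧ le s y ∧ ∀ z, le z x → le z y → le z s

/-- `y` covers `x` with respect to the relation `le`. -/
def RelCovBy {γ : Type*} (le : γ → γ → Prop) (x y : γ) : Prop :=
  le x y ∧ x ≠ y ∧ ∀ z, le x z → le z y → z = x ∨ z = y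

/-!
A dismantlable lattice `L` that is not a chain is an adjunct sum `K ]ᵇₐ M` of two dismantlable
sublattices. By induction on `|L|`: let `z` be the element added last in a dismantling chain, so
that `L ∖ {z}` is a dismantlable sublattice. If `z` has a unique lower cover `p` and a unique upper
cover `q`, and some `w ≠ z` lies strictly between them, then `L` is the adjunct sum of `L ∖ {z}`
and `{z}` at `p < q`; otherwise decompose `L ∖ {z}` and put `z` back into one of the summands.

The covering pairs of `K` and of `M` remain covering pairs of `L`, and `a ⋖ min M`, `max M ⋖ b`
are two more, so `nullity K + nullity M < nullity L`. If `K` and `M` have realizers with `t`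
orders, inserting the `i`-th order of `M` into the `i`-th order of `K` just above the
predecessors of `a` detects `x ≤ a`, and one more order, with `M` between the elements of `K` not
above `b` and those above `b`, detects `b ≤ x`: `L` has a realizer with `t + 1` orders. Hence
`dim L ≤ nullity L + 1` by induction, chains having dimension `1`.
-/

open Function Set

section Realizer

variable {α β : Type*}

theorem orderDim_le_of_isRealizer {le : α → α → Prop} {t : ℕ} (ht : 0 < t)
    {R : Fin t → α → α → Prop} (hR : IsRealizer le R) : orderDim le ≤ t :=
  Nat.sInf_le ⟨ht, R, hR⟩

theorem isRealizer_const_of_total [PartialOrder α] (htot : ∀ x y : α, x ≤ y ∨ y ≤ x) {t : ℕ}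
    (ht : 0 < t) : IsRealizer ((· ≤ ·) : α → α → Prop) fun _ : Fin t => (· ≤ ·) :=
  ⟨fun _ => { total := htot }, fun _ _ => ⟨fun h _ => h, fun h => h ⟨0, ht⟩⟩⟩

theorem IsLinearOrder.comap {r : β → β → Prop} [IsLinearOrder β r] {f : α → β}
    (hf : Injective f) : IsLinearOrder α (InvImage r f) where
  refl _ := refl_of r _
  trans _ _ _ := trans_of r
  antisymm _ _ h h' := hf (antisymm_of r h h')
  total _ _ := total_of r _ _

theorem IsRealizer.comap {le : α → α → Prop} {le' : β → β → Prop} {t : ℕ}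
    {R : Fin t → β → β → Prop} (hR : IsRealizer le' R) {f : α → β} (hf : Injective f)
    (hle : ∀ x y, le x y ↔ le' (f x) (f y)) :
    IsRealizer le fun i => InvImage (R i) f :=
  ⟨fun i => haveI := hR.1 i; IsLinearOrder.comap hf, fun x y => (hle x y).trans (hR.2 _ _)⟩

end Realizer

section Adjunct

variable {K M : Type*}

open Classical in
/-- The elements of `K` satisfying `D`, then `M`, then the rest of `K`, each block ordered by `r`
or `s`. -/
noncomputable def sumInsert (D : K → Prop) (r : K → K → Prop) (s : M → M → Prop) :
    K ⊕ M → K ⊕ M → Prop :=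
  InvImage (Prod.Lex (· < ·) (Sum.Lex r s))
    fun u => (u.elim (fun x => if D x then 0 else 2) fun _ => 1, u)

variable {D : K → Prop} {r : K → K → Prop} {s : M → M → Prop}

instance [IsLinearOrder K r] [IsLinearOrder M s] : IsLinearOrder (K ⊕ M) (sumInsert D r s) :=
  haveI : IsLinearOrder (ℕ × (K ⊕ M)) (Prod.Lex (· < ·) (Sum.Lex r s)) := {}
  IsLinearOrder.comap (r := Prod.Lex (· < ·) (Sum.Lex r s)) fun _ _ h => congrArg Prod.snd h

theorem sumInsert_inl_inr {x : K} {y : M} : sumInsert D r s (.inl x) (.inr y) ↔ D x := by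
  by_cases hx : D x <;> simp [sumInsert, InvImage, Prod.lex_def, hx]

theorem sumInsert_inr_inl {x : K} {y : M} : sumInsert D r s (.inr y) (.inl x) ↔ ¬ D x := by
  by_cases hx : D x <;> simp [sumInsert, InvImage, Prod.lex_def, hx]

theorem sumInsert_inr_inr {y y' : M} : sumInsert D r s (.inr y) (.inr y') ↔ s y y' := by
  simp [sumInsert, InvImage, Prod.lex_def]

theorem sumInsert_inl_inl_of_imp {x x' : K} (hD : D x' → D x) (h : r x x') :
    sumInsert D r s (.inl x) (.inl x') := by
  by_cases hx : D x <;> by_cases hx' : D x' <;> simp_all [sumInsert, InvImage, Prod.lex_def]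

theorem sumInsert_inl_inl [IsLinearOrder K r] (hD : ∀ x x', r x x' → D x' → D x) {x x' : K} :
    sumInsert D r s (.inl x) (.inl x') ↔ r x x' := by
  refine ⟨fun h => by_contra fun hne => ?_, fun h => sumInsert_inl_inl_of_imp (hD x x' h) h⟩
  have := hD _ _ ((total_of r x x').resolve_left hne)
  by_cases hx : D x <;> by_cases hx' : D x' <;> simp_all [sumInsert, InvImage, Prod.lex_def]

variable [PartialOrder K] [PartialOrder M] {t : ℕ}

noncomputable def adjunctRealizer (a b : K) (RK : Fin (t + 1) → K → K → Prop)
    (RM : Fin (t + 1) → M → M → Prop) : Fin (t + 2) → K ⊕ M → K ⊕ M → Prop :=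
  Fin.cons (sumInsert (¬ b ≤ ·) (RK 0) (RM 0)) fun i => sumInsert (RK i · a) (RK i) (RM i)

theorem isRealizer_adjunctLE {a b : K} (hab : a < b) {RK : Fin (t + 1) → K → K → Prop}
    {RM : Fin (t + 1) → M → M → Prop} (hRK : IsRealizer ((· ≤ ·) : K → K → Prop) RK)
    (hRM : IsRealizer ((· ≤ ·) : M → M → Prop) RM) :
    IsRealizer (adjunctLE a b) (adjunctRealizer a b RK RM) := by
  have hK := hRK.1
  have hM := hRM.1
  have hKext {x x' : K} (h : x ≤ x') (i) : RK i x x' := (hRK.2 x x').1 h i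
  have hmain (i) (x x' : K) :
      sumInsert (RK i · a) (RK i) (RM i) (.inl x) (.inl x') ↔ RK i x x' :=
    haveI := hK i
    sumInsert_inl_inl (D := (RK i · a)) fun _ _ h ha => trans_of (RK i) h ha
  refine ⟨fun j => ?_, ?_⟩
  · refine Fin.cases ?_ (fun i => ?_) j <;>
      simp only [adjunctRealizer, Fin.cons_zero, Fin.cons_succ] <;> infer_instance
  rintro (x | y) (x' | y') <;>
    simp only [adjunctLE, adjunctRealizer, Fin.forall_fin_succ (n := t + 1), Fin.cons_zero,
      Fin.cons_succ, sumInsert_inl_inr, sumInsert_inr_inl, sumInsert_inr_inr, not_not, hmain]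
  · rw [← hRK.2]
    exact ⟨fun h => ⟨sumInsert_inl_inl_of_imp (fun h' hb => h' (hb.trans h)) (hKext h 0), h⟩,
      And.right⟩
  · rw [← hRK.2]
    exact ⟨fun h => ⟨fun hb => hab.not_ge (hb.trans h), h⟩, And.right⟩
  · refine ⟨fun h => ⟨h, fun i hi => hab.ne ?_⟩, And.left⟩
    exact antisymm_of (RK i) (hKext hab.le i) (trans_of (RK i) (hKext h i) hi)
  · rw [← hRM.2]
    exact ⟨fun h => ⟨(hRM.2 _ _).1 h 0, h⟩, And.right⟩

end Adjunct

namespace IsSublatticeSet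

variable {α : Type*} [Lattice α] {S M : Set α} {z : α}

abbrev lattice (hS : IsSublatticeSet S) : Lattice S :=
  Subtype.lattice (fun _ _ hx hy => (hS hx hy).1) fun _ _ hx hy => (hS hx hy).2

theorem empty : IsSublatticeSet (∅ : Set α) := fun _ h => h.elim

theorem preimage_val (hS : IsSublatticeSet S) {T : Set α} (hT : IsSublatticeSet T) :
    @IsSublatticeSet S hS.lattice (Subtype.val ⁻¹' T) := fun _ hx _ hy => hT hx hy

theorem exists_forall_le [Finite S] (hS : IsSublatticeSet S) (hne : S.Nonempty) :
    ∃ m ∈ S, ∀ y ∈ S, m ≤ y := by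
  let := hS.lattice
  have := hne.to_subtype
  have := Fintype.ofFinite S
  let := Fintype.toOrderBot S
  exact ⟨(⊥ : S), (⊥ : S).2, fun y hy => (bot_le : ⊥ ≤ (⟨y, hy⟩ : S))⟩

theorem exists_forall_ge [Finite S] (hS : IsSublatticeSet S) (hne : S.Nonempty) :
    ∃ m ∈ S, ∀ y ∈ S, y ≤ m := by
  let := hS.lattice
  have := hne.to_subtype
  have := Fintype.ofFinite S
  let := Fintype.toOrderTop S
  exact ⟨(⊤ : S), (⊤ : S).2, fun y hy => (le_top : (⟨y, hy⟩ : S) ≤ ⊤)⟩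

theorem insert (hM : IsSublatticeSet M) (hsup : ∀ y ∈ M, y ⊔ z ∈ insert z M)
    (hinf : ∀ y ∈ M, y ⊓ z ∈ insert z M) : IsSublatticeSet (insert z M) := by
  rintro x (rfl | hx) y (rfl | hy)
  · simp
  · rw [sup_comm, inf_comm]; exact ⟨hsup y hy, hinf y hy⟩
  · exact ⟨hsup x hx, hinf x hx⟩
  · exact ⟨mem_insert_of_mem _ (hM hx hy).1, mem_insert_of_mem _ (hM hx hy).2⟩

end IsSublatticeSet

theorem Nat.apply_find_eq_of_le_add_one {g : ℕ → ℕ} (hg : ∀ m, g (m + 1) ≤ g m + 1) {v : ℕ}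
    (h0 : g 0 ≤ v) (h : ∃ m, v ≤ g m) : g (Nat.find h) = v := by
  refine le_antisymm ?_ (Nat.find_spec h)
  cases hm : Nat.find h with
  | zero => exact h0
  | succ m =>
    have := Nat.find_min h (by omega : m < Nat.find h)
    have := hg m
    omega

/-- A version of the chain in `Dismantlable` indexed by `ℕ`, which may stall. -/
structure IsDismantlingSeq {α : Type*} [Lattice α] (U : ℕ → Set α) : Prop where
  monotone : Monotone U
  isSublatticeSet : ∀ m, IsSublatticeSet (U m)
  zero : U 0 = ∅
  subsingleton_sdiff : ∀ m, (U (m + 1) \ U m).Subsingleton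
  exists_eq_univ : ∃ m, U m = univ

namespace IsDismantlingSeq

variable {α : Type*} [Lattice α] {U : ℕ → Set α}

theorem ncard_succ_le [Finite α] (hU : IsDismantlingSeq U) (m : ℕ) :
    (U (m + 1)).ncard ≤ (U m).ncard + 1 :=
  (ncard_le_ncard_sdiff_add_ncard (U (m + 1)) (U m)).trans <| by
    rw [add_comm]
    exact Nat.add_le_add_left (ncard_le_one_iff_subsingleton.2 (hU.subsingleton_sdiff m)) _

theorem preimage_val (hU : IsDismantlingSeq U) {S : Set α} (hS : IsSublatticeSet S) :
    @IsDismantlingSeq S hS.lattice fun m => Subtype.val ⁻¹' U m :=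
  let := hS.lattice
  { monotone := fun _ _ h => preimage_mono (hU.monotone h)
    isSublatticeSet := fun m => hS.preimage_val (hU.isSublatticeSet m)
    zero := by simp [hU.zero]
    subsingleton_sdiff := fun m => (hU.subsingleton_sdiff m).preimage Subtype.val_injective
    exists_eq_univ := hU.exists_eq_univ.imp fun _ h => by simp [h] }

theorem dismantlable [Finite α] (hU : IsDismantlingSeq U) : Dismantlable α := by
  classical
  have hex (i : Fin (Nat.card α)) : ∃ m, (i : ℕ) + 1 ≤ (U m).ncard :=
    hU.exists_eq_univ.imp fun m hm => by rw [hm, ncard_univ]; exact i.2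
  have hcard (i) : (U (Nat.find (hex i))).ncard = i + 1 :=
    Nat.apply_find_eq_of_le_add_one hU.ncard_succ_le (by simp [hU.zero]) (hex i)
  refine ⟨fun i => U (Nat.find (hex i)), fun i => hU.isSublatticeSet _,
    fun i j hij => hU.monotone (Nat.find_mono fun m hm => le_trans (by simpa using hij) hm),
    fun i => by rw [Nat.card_coe_set_eq, hcard], fun x => ?_⟩
  have hα : 0 < Nat.card α := Nat.card_pos_iff.2 ⟨⟨x⟩, inferInstance⟩
  let i : Fin (Nat.card α) := ⟨Nat.card α - 1, by omega⟩
  have : U (Nat.find (hex i)) = univ :=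
    eq_of_subset_of_ncard_le (subset_univ _) (by rw [ncard_univ, hcard]; simp [i]; omega)
  exact ⟨i, by beta_reduce; rw [this]; exact mem_univ x⟩

theorem exists_isSublatticeSet_compl_singleton [Nonempty α] (hU : IsDismantlingSeq U) :
    ∃ z : α, IsSublatticeSet ({z}ᶜ : Set α) := by
  classical
  let m := Nat.find hU.exists_eq_univ
  have hm : U m = univ := Nat.find_spec hU.exists_eq_univ
  obtain ⟨k, hk⟩ : ∃ k, m = k + 1 :=
    Nat.exists_eq_succ_of_ne_zero fun h => empty_ne_univ (hU.zero ▸ h ▸ hm)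
  obtain ⟨z, hz⟩ : ∃ z, z ∉ U k := by
    by_contra! h
    exact Nat.find_min hU.exists_eq_univ (by omega : k < m) (eq_univ_of_forall h)
  refine ⟨z, ?_⟩
  convert hU.isSublatticeSet k
  refine ext fun x => ⟨fun hx => by_contra fun hxk => hx ?_, fun hxk hxz => hz (hxz ▸ hxk)⟩
  exact hU.subsingleton_sdiff k ⟨hk ▸ hm ▸ mem_univ x, hxk⟩ ⟨hk ▸ hm ▸ mem_univ z, hz⟩

end IsDismantlingSeq

namespace Dismantlable

variable {α : Type*} [Lattice α]

theorem exists_isDismantlingSeq [Finite α] (hd : Dismantlable α) :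
    ∃ U : ℕ → Set α, IsDismantlingSeq U := by
  obtain ⟨T, hT, hmono, hcard, hcover⟩ := hd
  rcases isEmpty_or_nonempty α with hα | hα
  · exact ⟨fun _ => ∅, fun _ _ _ => le_rfl, fun _ => IsSublatticeSet.empty, rfl,
      fun _ => by simp, 0, Subsingleton.elim _ _⟩
  have hN : 0 < Nat.card α := Nat.card_pos
  let U : ℕ → Set α
    | 0 => ∅
    | k + 1 => T ⟨min k (Nat.card α - 1), by omega⟩
  have hUmono : Monotone U := monotone_nat_of_le_succ fun
    | 0 => empty_subset _
    | k + 1 => hmono _ _ (Fin.mk_le_mk.2 (by omega))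
  have hUcard : ∀ m, (U m).ncard = min m (Nat.card α)
    | 0 => by simp [U]
    | k + 1 => by rw [← Nat.card_coe_set_eq, hcard, Fin.val_mk]; omega
  refine ⟨U, hUmono, fun | 0 => IsSublatticeSet.empty | k + 1 => hT _, rfl, fun m => ?_,
    Nat.card α - 1 + 1, eq_univ_of_forall fun x => ?_⟩
  · rw [← ncard_le_one_iff_subsingleton, ncard_sdiff (hUmono (Nat.le_add_right m 1)),
      hUcard (m + 1), hUcard m]
    omega
  · obtain ⟨i, hi⟩ := hcover x
    exact hmono i _ (Fin.le_def.2 (by simp; omega)) hi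

theorem of_isSublatticeSet [Finite α] (hd : Dismantlable α) {S : Set α} (hS : IsSublatticeSet S) :
    @Dismantlable S hS.lattice :=
  let := hS.lattice
  have ⟨_, hU⟩ := hd.exists_isDismantlingSeq
  (hU.preimage_val hS).dismantlable

theorem exists_isSublatticeSet_compl_singleton [Finite α] [Nonempty α] (hd : Dismantlable α) :
    ∃ z : α, IsSublatticeSet ({z}ᶜ : Set α) :=
  have ⟨_, hU⟩ := hd.exists_isDismantlingSeq
  hU.exists_isSublatticeSet_compl_singleton

end Dismantlable

theorem Nat.card_compl_add_card {α : Type*} [Finite α] (M : Set α) :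
    Nat.card ↥Mᶜ + Nat.card M = Nat.card α := by
  rw [Nat.card_coe_set_eq, Nat.card_coe_set_eq, add_comm, ncard_add_ncard_compl]

section Nullity

variable {α : Type*}

theorem coverGraph_reachable_of_le [PartialOrder α] [LocallyFiniteOrder α] {x y : α}
    (h : x ≤ y) : (coverGraph α).Reachable x y :=
  (SimpleGraph.reachable_iff_reflTransGen x y).2 <|
    Relation.ReflTransGen.mono (fun _ _ => Or.inl) _ _ (le_iff_reflTransGen_covBy.1 h)

theorem coverGraph_preconnected [Lattice α] [Finite α] : (coverGraph α).Preconnected := by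
  let := LocallyFiniteOrder.ofFiniteIcc fun a b : α => toFinite (Icc a b)
  exact fun x y => (coverGraph_reachable_of_le inf_le_left).symm.trans
    (coverGraph_reachable_of_le inf_le_right)

theorem card_le_card_covBy_add_one [PartialOrder α] [OrderTop α] [Finite α] :
    Nat.card α ≤ Nat.card {p : α × α // p.1 ⋖ p.2} + 1 := by
  classical
  have hcov (x : {x : α // x ≠ ⊤}) : ∃ y, (x : α) ⋖ y :=
    (exists_covBy_le_of_lt (lt_top_iff_ne_top.2 x.2)).imp fun _ h => h.1
  choose f hf using hcov
  have hinj : Injective fun x => (⟨(x.1, f x), hf x⟩ : {p : α × α // p.1 ⋖ p.2}) :=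
    fun x y h => Subtype.ext (congrArg (·.1.1) h)
  have := Nat.card_le_card_of_injective _ hinj
  have : Nat.card α = Nat.card {x : α // x ≠ ⊤} + 1 := by
    rw [← Nat.card_unique (α := {x : α // x = ⊤}), add_comm, ← Nat.card_sum]
    exact Nat.card_congr (Equiv.sumCompl _).symm
  omega

theorem nullity_eq [Lattice α] [Finite α] [Nonempty α] :
    nullity α = Nat.card {p : α × α // p.1 ⋖ p.2} - Nat.card α + 1 := by
  have := (coverGraph_preconnected (α := α)).subsingleton_connectedComponent
  rw [nullity, Nat.card_unique (α := (coverGraph α).ConnectedComponent), Nat.cast_one]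

theorem nullity_nonneg [Lattice α] [Finite α] [Nonempty α] : 0 ≤ nullity α := by
  have := Fintype.ofFinite α
  let := Fintype.toOrderTop α
  have := card_le_card_covBy_add_one (α := α)
  rw [nullity_eq]
  omega

end Nullity

theorem covBy_coe_of_forall_notMem {α : Type*} [PartialOrder α] {S : Set α} {x y : S} (h : x ⋖ y)
    (hS : ∀ c ∉ S, ¬ ((x : α) < c ∧ c < y)) : (x : α) ⋖ y :=
  ⟨h.1, fun c hxc hcy => by
    by_cases hc : c ∈ S
    exacts [h.2 (show x < ⟨c, hc⟩ from hxc) hcy, hS c hc ⟨hxc, hcy⟩]⟩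

theorem Set.insert_compl_singleton {α : Type*} (z : α) : insert z ({z}ᶜ : Set α) = univ :=
  eq_univ_of_forall fun x => by by_cases h : x = z <;> simp [h]

section DoublyIrreducible

variable {α : Type*} [Lattice α] {p q z x : α}

theorem sup_eq_or_eq_sup (hQ : ∀ x, z < x ↔ q ≤ x) (y : α) : y ⊔ z = z ∨ y ⊔ z = y ⊔ q := by
  refine (em (y ≤ z)).imp sup_eq_right.2 fun hyz => le_antisymm ?_ ?_
  · exact sup_le_sup_left ((hQ q).2 le_rfl).le y
  · exact sup_le le_sup_left ((hQ _).1 (le_sup_right.lt_of_ne fun h => hyz (h ▸ le_sup_left)))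

theorem inf_eq_or_eq_inf (hP : ∀ x, x < z ↔ x ≤ p) (y : α) : y ⊓ z = z ∨ y ⊓ z = y ⊓ p := by
  refine (em (z ≤ y)).imp inf_eq_right.2 fun hzy => le_antisymm ?_ ?_
  · exact le_inf inf_le_left ((hP _).1 (inf_le_right.lt_of_ne fun h => hzy (h ▸ inf_le_left)))
  · exact inf_le_inf_left y ((hP p).2 le_rfl).le

theorem exists_forall_lt_iff_le [Finite α] (hz : IsSublatticeSet ({z}ᶜ : Set α))
    (hlt : ∃ u, u < z) : ∃ p, ∀ x, x < z ↔ x ≤ p := by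
  classical
  have := Fintype.ofFinite α
  let s := Finset.univ.filter (· < z)
  have hs : s.Nonempty := hlt.imp fun u hu => by simpa [s] using hu
  have hlt : s.sup' hs id < z :=
    (Finset.sup'_le hs id fun y hy => (by simpa [s] using hy : y < z).le).lt_of_ne <|
      SupClosed.finsetSup'_mem (fun x hx y hy => (hz hx hy).1) hs fun y hy =>
        (by simpa [s] using hy : y < z).ne
  exact ⟨s.sup' hs id, fun x =>
    ⟨fun hx => Finset.le_sup' id (by simpa [s] using hx), fun hx => hx.trans_lt hlt⟩⟩

theorem exists_forall_gt_iff_ge [Finite α] (hz : IsSublatticeSet ({z}ᶜ : Set α))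
    (hgt : ∃ u, z < u) : ∃ q, ∀ x, z < x ↔ q ≤ x := by
  classical
  have := Fintype.ofFinite α
  let s := Finset.univ.filter (z < ·)
  have hs : s.Nonempty := hgt.imp fun u hu => by simpa [s] using hu
  have hgt : z < s.inf' hs id :=
    (Finset.le_inf' hs id fun y hy => (by simpa [s] using hy : z < y).le).lt_of_ne' <|
      InfClosed.finsetInf'_mem (fun x hx y hy => (hz hx hy).2) hs fun y hy =>
        (by simpa [s] using hy : z < y).ne'
  exact ⟨s.inf' hs id, fun x =>
    ⟨fun hx => Finset.inf'_le id (by simpa [s] using hx), fun hx => hgt.trans_le hx⟩⟩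

theorem le_iff_le_of_ne (hP : ∀ x, x < z ↔ x ≤ p) (hx : x ≠ z) : x ≤ z ↔ x ≤ p := by
  rw [← hP, hx.le_iff_lt]

theorem ge_iff_ge_of_ne (hQ : ∀ x, z < x ↔ q ≤ x) (hx : x ≠ z) : z ≤ x ↔ q ≤ x := by
  rw [← hQ, hx.symm.le_iff_lt]

theorem le_or_le_of_forall_ne (hP : ∀ x, x < z ↔ x ≤ p) (hQ : ∀ x, z < x ↔ q ≤ x)
    (hw : ∀ w ≠ z, p < w → ¬ w < q) (hchain : ∀ u v, u ≠ z → v ≠ z → u ≤ v ∨ v ≤ u) (x : α) :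
    x ≤ z ∨ z ≤ x := by
  by_cases hx : x = z
  · exact .inl hx.le
  rw [le_iff_le_of_ne hP hx, ge_iff_ge_of_ne hQ hx]
  by_cases hxp : x ≤ p
  · exact .inl hxp
  have hpx : p < x := ((hchain x p hx ((hP p).2 le_rfl).ne).resolve_left hxp).lt_of_not_ge hxp
  refine .inr (by_contra fun hqx => hw x hx hpx ?_)
  exact ((hchain x q hx ((hQ q).2 le_rfl).ne').resolve_right hqx).lt_of_not_ge hqx

end DoublyIrreducible

/-- `S` is the adjunct sum `(S \ M) ]ᵇₐ M`. -/
structure IsAdjunctBlock {α : Type*} [Lattice α] (S : Set α) (a b : α) (M : Set α) : Prop where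
  subset : M ⊆ S
  nonempty : M.Nonempty
  isSublatticeSet : IsSublatticeSet M
  left_mem : a ∈ S \ M
  right_mem : b ∈ S \ M
  lt : a < b
  exists_between : ∃ w ∈ S \ M, a < w ∧ w < b
  le_iff : ∀ x ∈ S \ M, ∀ y ∈ M, (x ≤ y ↔ x ≤ a) ∧ (y ≤ x ↔ b ≤ x)

namespace IsAdjunctBlock

variable {α : Type*} [Lattice α] {a b p q z : α} {S M : Set α}

theorem isSublatticeSet_compl (h : IsAdjunctBlock univ a b M) : IsSublatticeSet Mᶜ := by
  have ha : a ∈ univ \ M := h.left_mem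
  have hb : b ∈ univ \ M := h.right_mem
  refine fun x hx y hy => ⟨fun hM => ?_, fun hM => ?_⟩
  · have hxa := (h.le_iff x ⟨trivial, hx⟩ _ hM).1.1 le_sup_left
    have hya := (h.le_iff y ⟨trivial, hy⟩ _ hM).1.1 le_sup_right
    exact h.lt.not_ge <| (h.le_iff a ha _ hM).2.1 (sup_le hxa hya)
  · have hxb := (h.le_iff x ⟨trivial, hx⟩ _ hM).2.1 inf_le_left
    have hyb := (h.le_iff y ⟨trivial, hy⟩ _ hM).2.1 inf_le_right
    exact h.lt.not_ge <| (h.le_iff b hb _ hM).1.1 (le_inf hxb hyb)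

theorem exists_isRealizer (h : IsAdjunctBlock univ a b M) {t : ℕ}
    {RK : Fin (t + 1) → ↥Mᶜ → ↥Mᶜ → Prop} {RM : Fin (t + 1) → M → M → Prop}
    (hRK : IsRealizer (· ≤ ·) RK) (hRM : IsRealizer (· ≤ ·) RM) :
    ∃ R : Fin (t + 2) → α → α → Prop, IsRealizer (· ≤ ·) R := by
  classical
  let e : ↥Mᶜ ⊕ ↥M ≃ α := (Equiv.sumComm _ _).trans (Equiv.Set.sumCompl M)
  have hle : ∀ u v, e u ≤ e v ↔ adjunctLE (⟨a, h.left_mem.2⟩ : ↥Mᶜ) ⟨b, h.right_mem.2⟩ u v := by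
    rintro (x | y) (x' | y')
    · exact Iff.rfl
    · exact (h.le_iff x ⟨trivial, x.2⟩ y' y'.2).1
    · exact (h.le_iff x' ⟨trivial, x'.2⟩ y y.2).2
    · exact Iff.rfl
  have hab : (⟨a, h.left_mem.2⟩ : ↥Mᶜ) < ⟨b, h.right_mem.2⟩ := h.lt
  refine ⟨_, (isRealizer_adjunctLE hab hRK hRM).comap e.symm.injective fun x y => ?_⟩
  rw [← hle, e.apply_symm_apply, e.apply_symm_apply]

theorem covBy_coe_compl (h : IsAdjunctBlock univ a b M) {x y : ↥Mᶜ} (hxy : x ⋖ y) :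
    (x : α) ⋖ y :=
  covBy_coe_of_forall_notMem hxy fun c hc ⟨hxc, hcy⟩ => by
    rw [mem_compl_iff, not_not] at hc
    obtain ⟨w, ⟨-, hw⟩, haw, hwb⟩ := h.exists_between
    have hxa := (h.le_iff x ⟨trivial, x.2⟩ c hc).1.1 hxc.le
    have hby := (h.le_iff y ⟨trivial, y.2⟩ c hc).2.1 hcy.le
    exact hxy.2 (c := ⟨w, hw⟩) (hxa.trans_lt haw) (hwb.trans_le hby)

theorem covBy_coe (h : IsAdjunctBlock univ a b M) {y y' : M} (hyy : y ⋖ y') : (y : α) ⋖ y' :=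
  covBy_coe_of_forall_notMem hyy fun c hc ⟨hyc, hcy⟩ => h.lt.not_ge <|
    ((h.le_iff c ⟨trivial, hc⟩ y y.2).2.1 hyc.le).trans
      ((h.le_iff c ⟨trivial, hc⟩ y' y'.2).1.1 hcy.le)

theorem left_covBy (h : IsAdjunctBlock univ a b M) {m : α} (hm : m ∈ M)
    (hmin : ∀ y ∈ M, m ≤ y) : a ⋖ m := by
  refine ⟨((h.le_iff a h.left_mem m hm).1.2 le_rfl).lt_of_ne fun ham => h.left_mem.2 (ham ▸ hm),
    fun c hac hcm => ?_⟩
  by_cases hc : c ∈ M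
  · exact (hmin c hc).not_gt hcm
  · exact hac.not_ge ((h.le_iff c ⟨trivial, hc⟩ m hm).1.1 hcm.le)

theorem covBy_right (h : IsAdjunctBlock univ a b M) {m : α} (hm : m ∈ M)
    (hmax : ∀ y ∈ M, y ≤ m) : m ⋖ b := by
  refine ⟨((h.le_iff b h.right_mem m hm).2.2 le_rfl).lt_of_ne fun hmb => h.right_mem.2 (hmb ▸ hm),
    fun c hmc hcb => ?_⟩
  by_cases hc : c ∈ M
  · exact (hmax c hc).not_gt hmc
  · exact hcb.not_ge ((h.le_iff c ⟨trivial, hc⟩ m hm).2.1 hmc.le)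

theorem card_covBy_add_two_le [Finite α] (h : IsAdjunctBlock univ a b M) :
    Nat.card {p : ↥Mᶜ × ↥Mᶜ // p.1 ⋖ p.2} + Nat.card {p : M × M // p.1 ⋖ p.2} + 2 ≤
      Nat.card {p : α × α // p.1 ⋖ p.2} := by
  obtain ⟨m₀, hm₀, hmin⟩ := h.isSublatticeSet.exists_forall_le h.nonempty
  obtain ⟨m₁, hm₁, hmax⟩ := h.isSublatticeSet.exists_forall_ge h.nonempty
  let fK (p : {p : ↥Mᶜ × ↥Mᶜ // p.1 ⋖ p.2}) : {p : α × α // p.1 ⋖ p.2} :=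
    ⟨(p.1.1, p.1.2), h.covBy_coe_compl p.2⟩
  let fM (p : {p : M × M // p.1 ⋖ p.2}) : {p : α × α // p.1 ⋖ p.2} :=
    ⟨(p.1.1, p.1.2), h.covBy_coe p.2⟩
  let g : Bool → {p : α × α // p.1 ⋖ p.2}
    | true => ⟨(a, m₀), h.left_covBy hm₀ hmin⟩
    | false => ⟨(m₁, b), h.covBy_right hm₁ hmax⟩
  have ha : a ∉ M := h.left_mem.2
  have hb : b ∉ M := h.right_mem.2
  -- The four kinds of pairs are told apart by which of their coordinates lie in `M`.
  have hinj : Injective (Sum.elim (Sum.elim fK fM) g) := by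
    refine (Injective.sumElim ?_ ?_ ?_).sumElim ?_ ?_ <;>
      simp only [Injective, ne_eq, Sum.forall, Sum.elim_inl, Sum.elim_inr, Bool.forall_bool,
        Subtype.forall, Prod.forall, fK, fM, g, Subtype.mk.injEq, Prod.mk.injEq] <;>
      grind
  simpa [Nat.card_sum] using Nat.card_le_card_of_injective _ hinj

theorem nullity_add_nullity_lt [Finite α] (h : IsAdjunctBlock univ a b M) :
    nullity ↥Mᶜ + nullity M < nullity α := by
  let := h.isSublatticeSet_compl.lattice
  let := h.isSublatticeSet.lattice
  have := h.nonempty.to_subtype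
  have : Nonempty ↥Mᶜ := ⟨⟨a, h.left_mem.2⟩⟩
  have : Nonempty α := ⟨a⟩
  have := Nat.card_compl_add_card M
  have := h.card_covBy_add_two_le
  rw [nullity_eq, nullity_eq, nullity_eq]
  omega

theorem image_val (hS : IsSublatticeSet S) {a b : S} {M : Set S}
    (h : @IsAdjunctBlock S hS.lattice univ a b M) : IsAdjunctBlock S a b (Subtype.val '' M) := by
  let := hS.lattice
  have hmem {x : S} : (x : α) ∈ Subtype.val '' M ↔ x ∈ M := Subtype.val_injective.mem_set_image
  obtain ⟨w, hw, haw, hwb⟩ := h.exists_between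
  refine ⟨Subtype.coe_image_subset S M, h.nonempty.image _, ?_, ⟨a.2, hmem.not.2 h.left_mem.2⟩,
    ⟨b.2, hmem.not.2 h.right_mem.2⟩, h.lt, ⟨w, ⟨w.2, hmem.not.2 hw.2⟩, haw, hwb⟩, ?_⟩
  · rintro _ ⟨x, hx, rfl⟩ _ ⟨y, hy, rfl⟩
    exact ⟨⟨_, (h.isSublatticeSet hx hy).1, rfl⟩, ⟨_, (h.isSublatticeSet hx hy).2, rfl⟩⟩
  · rintro x ⟨hxS, hxM⟩ _ ⟨y, hy, rfl⟩
    exact h.le_iff ⟨x, hxS⟩ ⟨trivial, fun h' => hxM (hmem.2 h')⟩ y hy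

theorem insert_left (h : IsAdjunctBlock S a b M)
    (hz : ∀ y ∈ M, (z ≤ y ↔ z ≤ a) ∧ (y ≤ z ↔ b ≤ z)) : IsAdjunctBlock (insert z S) a b M := by
  obtain ⟨w, hw, haw, hwb⟩ := h.exists_between
  refine ⟨h.subset.trans (subset_insert _ _), h.nonempty, h.isSublatticeSet,
    ⟨mem_insert_of_mem _ h.left_mem.1, h.left_mem.2⟩,
    ⟨mem_insert_of_mem _ h.right_mem.1, h.right_mem.2⟩, h.lt,
    ⟨w, ⟨mem_insert_of_mem _ hw.1, hw.2⟩, haw, hwb⟩, ?_⟩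
  rintro x ⟨rfl | hx, hxM⟩ y hy
  exacts [hz y hy, h.le_iff x ⟨hx, hxM⟩ y hy]

theorem insert_right (h : IsAdjunctBlock S a b M) (hzS : z ∉ S)
    (hM : IsSublatticeSet (insert z M))
    (hz : ∀ x ∈ S \ M, (x ≤ z ↔ x ≤ a) ∧ (z ≤ x ↔ b ≤ x)) :
    IsAdjunctBlock (insert z S) a b (insert z M) := by
  have hmem {x} (hx : x ∈ S \ M) : x ∈ insert z S \ insert z M :=
    ⟨mem_insert_of_mem _ hx.1, fun h' => h'.elim (fun hxz => hzS (hxz ▸ hx.1)) hx.2⟩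
  obtain ⟨w, hw, haw, hwb⟩ := h.exists_between
  refine ⟨insert_subset_insert h.subset, insert_nonempty _ _, hM, hmem h.left_mem,
    hmem h.right_mem, h.lt, ⟨w, hmem hw, haw, hwb⟩, ?_⟩
  rintro x ⟨hxzS, hxzM⟩ y (rfl | hy)
  all_goals
    have hx : x ∈ S \ M := ⟨hxzS.resolve_left fun hxz => hxzM (.inl hxz), fun h' => hxzM (.inr h')⟩
  exacts [hz x hx, h.le_iff x hx y hy]

theorem insert_bot (h : IsAdjunctBlock {z}ᶜ a b M) (hz : ∀ x, z ≤ x) :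
    IsAdjunctBlock univ a b M :=
  insert_compl_singleton z ▸ h.insert_left fun y hy =>
    ⟨iff_of_true (hz y) (hz a), iff_of_false (fun hyz => h.subset hy (le_antisymm hyz (hz y)))
      fun hbz => h.right_mem.1 (le_antisymm hbz (hz b))⟩

theorem insert_top (h : IsAdjunctBlock {z}ᶜ a b M) (hz : ∀ x, x ≤ z) :
    IsAdjunctBlock univ a b M :=
  insert_compl_singleton z ▸ h.insert_left fun y hy =>
    ⟨iff_of_false (fun hzy => h.subset hy (le_antisymm (hz y) hzy))
      fun hza => h.left_mem.1 (le_antisymm (hz a) hza), iff_of_true (hz y) (hz b)⟩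

theorem insert_of_notMem (h : IsAdjunctBlock {z}ᶜ a b M) (hP : ∀ x, x < z ↔ x ≤ p)
    (hQ : ∀ x, z < x ↔ q ≤ x) (hpM : p ∉ M) (hqM : q ∉ M) : IsAdjunctBlock univ a b M := by
  have hp : p ∈ ({z}ᶜ : Set α) := ((hP p).2 le_rfl).ne
  have hq : q ∈ ({z}ᶜ : Set α) := ((hQ q).2 le_rfl).ne'
  refine insert_compl_singleton z ▸ h.insert_left fun y hy => ⟨?_, ?_⟩
  · rw [ge_iff_ge_of_ne hQ (h.subset hy), ge_iff_ge_of_ne hQ h.left_mem.1]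
    exact (h.le_iff q ⟨hq, hqM⟩ y hy).1
  · rw [le_iff_le_of_ne hP (h.subset hy), le_iff_le_of_ne hP h.right_mem.1]
    exact (h.le_iff p ⟨hp, hpM⟩ y hy).2

theorem insert_of_mem (h : IsAdjunctBlock {z}ᶜ a b M) (hP : ∀ x, x < z ↔ x ≤ p)
    (hQ : ∀ x, z < x ↔ q ≤ x) (hpM : p ∈ M) (hqM : q ∈ M) :
    IsAdjunctBlock univ a b (insert z M) := by
  refine insert_compl_singleton z ▸ h.insert_right (by simp)
    (h.isSublatticeSet.insert (fun y hy => ?_) fun y hy => ?_) fun x hx => ?_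
  · rcases sup_eq_or_eq_sup hQ y with e | e <;> rw [e]
    exacts [mem_insert _ _, mem_insert_of_mem _ (h.isSublatticeSet hy hqM).1]
  · rcases inf_eq_or_eq_inf hP y with e | e <;> rw [e]
    exacts [mem_insert _ _, mem_insert_of_mem _ (h.isSublatticeSet hy hpM).2]
  · rw [le_iff_le_of_ne hP hx.1, ge_iff_ge_of_ne hQ hx.1]
    exact ⟨(h.le_iff x hx p hpM).1, (h.le_iff x hx q hqM).2⟩

theorem insert_of_notMem_of_mem (h : IsAdjunctBlock {z}ᶜ a b M) (hP : ∀ x, x < z ↔ x ≤ p)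
    (hQ : ∀ x, z < x ↔ q ≤ x) (hw : ∀ w ≠ z, p < w → ¬ w < q) (hpM : p ∉ M) (hqM : q ∈ M) :
    IsAdjunctBlock univ a b (insert z M) := by
  -- As nothing but `z` lies strictly between `p` and `q`, `p = a` and `z` lies below all of `M`.
  have hpz : p < z := (hP p).2 le_rfl
  have hzq : z < q := (hQ q).2 le_rfl
  have hlt {y} (hy : y ∈ M) : a < y :=
    ((h.le_iff a h.left_mem y hy).1.2 le_rfl).lt_of_ne fun e => h.left_mem.2 (e ▸ hy)
  have hpa : p = a := ((h.le_iff p ⟨hpz.ne, hpM⟩ q hqM).1.1 (hpz.trans hzq).le).eq_of_not_lt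
    fun hpa => hw a h.left_mem.1 hpa (hlt hqM)
  have hzy {y} (hy : y ∈ M) : z ≤ y := by
    have hm : q ⊓ y ∈ M := (h.isSublatticeSet hqM hy).2
    have := inf_le_left.eq_of_not_lt fun hlt' => hw _ (h.subset hm) (hpa ▸ hlt hm) hlt'
    exact hzq.le.trans (inf_eq_left.1 this)
  refine insert_compl_singleton z ▸ h.insert_right (by simp)
    (h.isSublatticeSet.insert (fun y hy => ?_) fun y hy => ?_) fun x hx => ?_
  · rw [sup_eq_left.2 (hzy hy)]; exact mem_insert_of_mem _ hy
  · rw [inf_eq_right.2 (hzy hy)]; exact mem_insert _ _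
  · rw [le_iff_le_of_ne hP hx.1, ge_iff_ge_of_ne hQ hx.1, hpa]
    exact ⟨Iff.rfl, (h.le_iff x hx q hqM).2⟩

theorem insert_of_mem_of_notMem (h : IsAdjunctBlock {z}ᶜ a b M) (hP : ∀ x, x < z ↔ x ≤ p)
    (hQ : ∀ x, z < x ↔ q ≤ x) (hw : ∀ w ≠ z, p < w → ¬ w < q) (hpM : p ∈ M) (hqM : q ∉ M) :
    IsAdjunctBlock univ a b (insert z M) := by
  have hpz : p < z := (hP p).2 le_rfl
  have hzq : z < q := (hQ q).2 le_rfl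
  have hlt {y} (hy : y ∈ M) : y < b :=
    ((h.le_iff b h.right_mem y hy).2.2 le_rfl).lt_of_ne fun e => h.right_mem.2 (e ▸ hy)
  have hqb : q = b := (((h.le_iff q ⟨hzq.ne', hqM⟩ p hpM).2.1 (hpz.trans hzq).le).eq_of_not_lt
    fun hbq => hw b h.right_mem.1 (hlt hpM) hbq).symm
  have hyz {y} (hy : y ∈ M) : y ≤ z := by
    have hm : p ⊔ y ∈ M := (h.isSublatticeSet hpM hy).1
    have := le_sup_left.eq_of_not_lt fun hlt' => hw _ (h.subset hm) hlt' (hqb ▸ hlt hm)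
    exact (sup_eq_left.1 this.symm).trans hpz.le
  refine insert_compl_singleton z ▸ h.insert_right (by simp)
    (h.isSublatticeSet.insert (fun y hy => ?_) fun y hy => ?_) fun x hx => ?_
  · rw [sup_eq_right.2 (hyz hy)]; exact mem_insert _ _
  · rw [inf_eq_left.2 (hyz hy)]; exact mem_insert_of_mem _ hy
  · rw [le_iff_le_of_ne hP hx.1, ge_iff_ge_of_ne hQ hx.1, hqb]
    exact ⟨(h.le_iff x hx p hpM).1, Iff.rfl⟩

end IsAdjunctBlock

theorem isAdjunctBlock_singleton {α : Type*} [Lattice α] {p q z : α} (hP : ∀ x, x < z ↔ x ≤ p)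
    (hQ : ∀ x, z < x ↔ q ≤ x) (hw : ∃ w ≠ z, p < w ∧ w < q) : IsAdjunctBlock univ p q {z} where
  subset := subset_univ _
  nonempty := singleton_nonempty z
  isSublatticeSet := by rintro _ rfl _ rfl; simp
  left_mem := ⟨trivial, ((hP p).2 le_rfl).ne⟩
  right_mem := ⟨trivial, ((hQ q).2 le_rfl).ne'⟩
  lt := ((hP p).2 le_rfl).trans ((hQ q).2 le_rfl)
  exists_between := hw.imp fun _ ⟨hwz, hpw, hwq⟩ => ⟨⟨trivial, hwz⟩, hpw, hwq⟩
  le_iff := by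
    rintro x ⟨-, hx⟩ _ rfl
    exact ⟨le_iff_le_of_ne hP hx, ge_iff_ge_of_ne hQ hx⟩

theorem exists_isAdjunctBlock_of_compl_singleton {α : Type*} [Lattice α] [Finite α] {z u v : α}
    (hz : IsSublatticeSet ({z}ᶜ : Set α)) (huv : ¬ u ≤ v) (hvu : ¬ v ≤ u)
    (hrec : ∀ u v : α, u ≠ z → v ≠ z → ¬ u ≤ v → ¬ v ≤ u →
      ∃ (a b : α) (M : Set α), IsAdjunctBlock {z}ᶜ a b M) :
    ∃ (a b : α) (M : Set α), IsAdjunctBlock univ a b M := by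
  have hrec' (hcomp : ∀ x, x ≤ z ∨ z ≤ x) :
      ∃ (a b : α) (M : Set α), IsAdjunctBlock {z}ᶜ a b M := by
    refine hrec u v ?_ ?_ huv hvu <;> rintro rfl
    exacts [(hcomp v).elim hvu huv, (hcomp u).elim huv hvu]
  by_cases hbot : ∀ x, z ≤ x
  · obtain ⟨a, b, M, h⟩ := hrec' fun x => .inr (hbot x)
    exact ⟨a, b, M, h.insert_bot hbot⟩
  by_cases htop : ∀ x, x ≤ z
  · obtain ⟨a, b, M, h⟩ := hrec' fun x => .inl (htop x)
    exact ⟨a, b, M, h.insert_top htop⟩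
  push Not at hbot htop
  obtain ⟨p, hP⟩ := exists_forall_lt_iff_le hz (hbot.elim fun x hx => ⟨x ⊓ z, inf_lt_right.2 hx⟩)
  obtain ⟨q, hQ⟩ := exists_forall_gt_iff_ge hz (htop.elim fun x hx => ⟨z ⊔ x, left_lt_sup.2 hx⟩)
  by_cases hw : ∃ w ≠ z, p < w ∧ w < q
  · exact ⟨p, q, {z}, isAdjunctBlock_singleton hP hQ hw⟩
  simp only [not_exists, not_and] at hw
  obtain ⟨a, b, M, h⟩ : ∃ (a b : α) (M : Set α), IsAdjunctBlock {z}ᶜ a b M := by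
    by_cases hchain : ∀ u v : α, u ≠ z → v ≠ z → u ≤ v ∨ v ≤ u
    · exact hrec' (le_or_le_of_forall_ne hP hQ hw hchain)
    push Not at hchain
    obtain ⟨u, v, hu, hv, huv, hvu⟩ := hchain
    exact hrec u v hu hv huv hvu
  by_cases hpM : p ∈ M <;> by_cases hqM : q ∈ M
  · exact ⟨a, b, _, h.insert_of_mem hP hQ hpM hqM⟩
  · exact ⟨a, b, _, h.insert_of_mem_of_notMem hP hQ hw hpM hqM⟩
  · exact ⟨a, b, _, h.insert_of_notMem_of_mem hP hQ hw hpM hqM⟩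
  · exact ⟨a, b, _, h.insert_of_notMem hP hQ hpM hqM⟩

theorem Dismantlable.exists_isAdjunctBlock {α : Type*} [Lattice α] [Finite α]
    (hd : Dismantlable α) {u v : α} (huv : ¬ u ≤ v) (hvu : ¬ v ≤ u) :
    ∃ (a b : α) (M : Set α), IsAdjunctBlock univ a b M := by
  induction hn : Nat.card α using Nat.strong_induction_on generalizing α with
  | _ n ih =>
  have : Nonempty α := ⟨u⟩
  obtain ⟨z, hz⟩ := hd.exists_isSublatticeSet_compl_singleton
  refine exists_isAdjunctBlock_of_compl_singleton hz huv hvu fun u v hu hv huv hvu => ?_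
  let := hz.lattice
  have hlt : Nat.card ({z}ᶜ : Set α) < n := by
    rw [← hn, Nat.card_coe_set_eq]
    exact ncard_lt_card (compl_ne_univ.2 (singleton_nonempty z))
  obtain ⟨a, b, M, h⟩ :=
    ih _ hlt (hd.of_isSublatticeSet hz) (u := ⟨u, hu⟩) (v := ⟨v, hv⟩) huv hvu rfl
  exact ⟨a, b, _, h.image_val hz⟩

theorem Dismantlable.exists_isRealizer {α : Type*} [Lattice α] [Finite α] (hd : Dismantlable α)
    {t : ℕ} (ht0 : 0 < t) (ht : nullity α + 1 ≤ t) :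
    ∃ R : Fin t → α → α → Prop, IsRealizer (· ≤ ·) R := by
  induction hn : Nat.card α using Nat.strong_induction_on generalizing α t with
  | _ n ih =>
  by_cases hchain : ∀ x y : α, x ≤ y ∨ y ≤ x
  · exact ⟨_, isRealizer_const_of_total hchain ht0⟩
  push Not at hchain
  obtain ⟨u, v, huv, hvu⟩ := hchain
  obtain ⟨a, b, M, h⟩ := hd.exists_isAdjunctBlock huv hvu
  let := h.isSublatticeSet_compl.lattice
  let := h.isSublatticeSet.lattice
  have := h.nonempty.to_subtype
  have : Nonempty ↥Mᶜ := ⟨⟨a, h.left_mem.2⟩⟩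
  have hcard := Nat.card_compl_add_card M
  have := Nat.card_pos (α := M)
  have := Nat.card_pos (α := ↥Mᶜ)
  have := h.nullity_add_nullity_lt
  have := nullity_nonneg (α := ↥Mᶜ)
  have := nullity_nonneg (α := M)
  obtain ⟨s, rfl⟩ : ∃ s, t = s + 2 := ⟨t - 2, by omega⟩
  obtain ⟨RK, hRK⟩ := ih _ (by omega) (hd.of_isSublatticeSet h.isSublatticeSet_compl)
    s.succ_pos (by push_cast; omega) rfl
  obtain ⟨RM, hRM⟩ := ih _ (by omega) (hd.of_isSublatticeSet h.isSublatticeSet)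
    s.succ_pos (by push_cast; omega) rfl
  exact h.exists_isRealizer hRK hRM

/-- the order dimension of a finite dismantlable lattice of
nullity `k` is at most `k + 1`. -/
theorem dim_dismantlable_le_nullity_succ {α : Type*} [Lattice α] [Finite α]
    (hd : Dismantlable α) {k : ℕ} (hk : nullity α = (k : ℤ)) :
    orderDim ((· ≤ ·) : α → α → Prop) ≤ k + 1 := by
  obtain ⟨R, hR⟩ := hd.exists_isRealizer k.succ_pos (by rw [hk]; push_cast; rfl)
  exact orderDim_le_of_isRealizer k.succ_pos hR
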